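/- Let G₁ and G₂ be finite connected simple graphs with n₁ and n₂ vertices and distance matrices D₁, D₂, each admitting a nonnegative curvature (an entrywise nonnegative wᵢ with Dᵢwᵢ = nᵢ·𝟏). Let G be the graph obtained by adding an edge between a vertex of G₁ and a vertex of G₂, with distance matrix D_G. Identifying ℝ^{n₁} and ℝ^{n₂} with the corresponding coordinate subspaces of ℝ^{n₁+n₂} (augmenting by zeros), we have null(D_G) = null(D₁) ⊕ null(D₂); in particular dim null(D_G) = dim null(D₁) + dim null(D₂). -/

import Mathlib

/-!
Every path between the two sides crosses the bridge, so `D_G` has the blocks `D₁`, `D₂` and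
off-diagonal entries `D₁ a u + 1 + D₂ v b`. Write a vector as `(η, ξ)` and put
`S₁ = Σ η`, `S₂ = Σ ξ`, `T₁ = (D₁ η) u`, `T₂ = (D₂ ξ) v`. The block equations of `D_G (η, ξ) = 0`
read `D₁ η + (D₁ e_u + 𝟏) S₂ + T₂ 𝟏 = 0` and its mirror image. Evaluating them at `u`, `v` and
pairing them with the curvatures (by symmetry `wᵢᵀ Dᵢ y = nᵢ Σ y`) gives a linear system in
`S₁, S₂, T₁, T₂` whose only solution is `0`, because `Wᵢ = Σ wᵢ > 0` makes
`2 n₁ W₂ + 2 n₂ W₁ + W₁ W₂` nonzero. Then the block equations reduce to `D₁ η = 0 = D₂ ξ`;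
conversely a null vector of `Dᵢ` sums to `0`, for the same reason.
-/

/-- The graph obtained by adding an edge between the vertex `u` of `G₁` and the
vertex `v` of `G₂` (the graphs being on disjoint vertex sets). -/
def bridgeGraph {V₁ V₂ : Type*} (G₁ : SimpleGraph V₁) (G₂ : SimpleGraph V₂)
    (u : V₁) (v : V₂) : SimpleGraph (V₁ ⊕ V₂) :=
  SimpleGraph.fromRel (fun x y =>
    (∃ a b, x = Sum.inl a ∧ y = Sum.inl b ∧ G₁.Adj a b) ∨
    (∃ a b, x = Sum.inr a ∧ y = Sum.inr b ∧ G₂.Adj a b) ∨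
    (x = Sum.inl u ∧ y = Sum.inr v))

/-- Extension by zero of a vector indexed by `V₁` to a vector indexed by `V₁ ⊕ V₂`,
as a linear map. -/
def extendLeft (V₁ V₂ : Type*) : (V₁ → ℝ) →ₗ[ℝ] (V₁ ⊕ V₂ → ℝ) where
  toFun η := Sum.elim η 0
  map_add' x y := by funext z; cases z <;> simp
  map_smul' c x := by funext z; cases z <;> simp

/-- Extension by zero of a vector indexed by `V₂` to a vector indexed by `V₁ ⊕ V₂`,
as a linear map. -/
def extendRight (V₁ V₂ : Type*) : (V₂ → ℝ) →ₗ[ℝ] (V₁ ⊕ V₂ → ℝ) where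
  toFun ξ := Sum.elim 0 ξ
  map_add' x y := by funext z; cases z <;> simp
  map_smul' c x := by funext z; cases z <;> simp

open Matrix

lemma SimpleGraph.Adj.dist_le_dist_add_one {V : Type*} {G : SimpleGraph V} {a b : V}
    (hab : G.Adj a b) (c : V) : G.dist a c ≤ G.dist b c + 1 := by
  rw [G.dist_comm, G.dist_comm (u := b)]
  rcases hab.diff_dist_adj (u := c) with h | h | h <;> omega

namespace bridgeGraph

variable {V₁ V₂ : Type*} {G₁ : SimpleGraph V₁} {G₂ : SimpleGraph V₂} {u : V₁} {v : V₂}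

@[simp]
lemma adj_inl_inl {a b : V₁} :
    (bridgeGraph G₁ G₂ u v).Adj (.inl a) (.inl b) ↔ G₁.Adj a b := by
  simpa [bridgeGraph, SimpleGraph.adj_comm] using @SimpleGraph.Adj.ne _ G₁ a b

@[simp]
lemma adj_inr_inr {a b : V₂} :
    (bridgeGraph G₁ G₂ u v).Adj (.inr a) (.inr b) ↔ G₂.Adj a b := by
  simpa [bridgeGraph, SimpleGraph.adj_comm] using @SimpleGraph.Adj.ne _ G₂ a b

@[simp]
lemma adj_inl_inr {a : V₁} {b : V₂} :
    (bridgeGraph G₁ G₂ u v).Adj (.inl a) (.inr b) ↔ a = u ∧ b = v := by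
  simp [bridgeGraph]

@[simp]
lemma adj_inr_inl {a : V₁} {b : V₂} :
    (bridgeGraph G₁ G₂ u v).Adj (.inr b) (.inl a) ↔ a = u ∧ b = v := by
  simp [bridgeGraph]

def inlHom : G₁ →g bridgeGraph G₁ G₂ u v := ⟨Sum.inl, adj_inl_inl.mpr⟩

def inrHom : G₂ →g bridgeGraph G₁ G₂ u v := ⟨Sum.inr, adj_inr_inr.mpr⟩

noncomputable def dist' (G₁ : SimpleGraph V₁) (G₂ : SimpleGraph V₂) (u : V₁) (v : V₂) :
    V₁ ⊕ V₂ → V₁ ⊕ V₂ → ℕ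
  | .inl a, .inl b => G₁.dist a b
  | .inl a, .inr b => G₁.dist a u + 1 + G₂.dist v b
  | .inr a, .inl b => G₂.dist a v + 1 + G₁.dist u b
  | .inr a, .inr b => G₂.dist a b

lemma exists_walk_length_eq_dist' (hG₁ : G₁.Connected) (hG₂ : G₂.Connected)
    (x y : V₁ ⊕ V₂) :
    ∃ p : (bridgeGraph G₁ G₂ u v).Walk x y, p.length = dist' G₁ G₂ u v x y := by
  have inl_walk (a b : V₁) : ∃ p : (bridgeGraph G₁ G₂ u v).Walk (.inl a) (.inl b),
      p.length = G₁.dist a b := by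
    obtain ⟨p, hp⟩ := (hG₁ a b).exists_walk_length_eq_dist
    exact ⟨p.map inlHom, (p.length_map inlHom).trans hp⟩
  have inr_walk (a b : V₂) : ∃ p : (bridgeGraph G₁ G₂ u v).Walk (.inr a) (.inr b),
      p.length = G₂.dist a b := by
    obtain ⟨p, hp⟩ := (hG₂ a b).exists_walk_length_eq_dist
    exact ⟨p.map inrHom, (p.length_map inrHom).trans hp⟩
  rcases x with a | a <;> rcases y with b | b
  · exact inl_walk a b
  · obtain ⟨p, hp⟩ := inl_walk a u
    obtain ⟨q, hq⟩ := inr_walk v b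
    refine ⟨p.append (.cons (adj_inl_inr.mpr ⟨rfl, rfl⟩) q), ?_⟩
    simp only [SimpleGraph.Walk.length_append, SimpleGraph.Walk.length_cons, hp, hq, dist']
    omega
  · obtain ⟨p, hp⟩ := inr_walk a v
    obtain ⟨q, hq⟩ := inl_walk u b
    refine ⟨p.append (.cons (adj_inr_inl.mpr ⟨rfl, rfl⟩) q), ?_⟩
    simp only [SimpleGraph.Walk.length_append, SimpleGraph.Walk.length_cons, hp, hq, dist']
    omega
  · exact inr_walk a b

lemma dist'_le_dist'_add_one_of_adj {x z : V₁ ⊕ V₂} (h : (bridgeGraph G₁ G₂ u v).Adj x z)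
    (y : V₁ ⊕ V₂) : dist' G₁ G₂ u v x y ≤ dist' G₁ G₂ u v z y + 1 := by
  rcases x with a | a <;> rcases z with b | b <;> rcases y with c | c <;>
    simp only [adj_inl_inl, adj_inr_inr, adj_inl_inr, adj_inr_inl] at h <;>
    simp only [dist']
  · exact h.dist_le_dist_add_one c
  · linarith [h.dist_le_dist_add_one u]
  · obtain ⟨rfl, rfl⟩ := h; simp only [SimpleGraph.dist_self]; omega
  · obtain ⟨rfl, rfl⟩ := h; simp only [SimpleGraph.dist_self]; omega
  · obtain ⟨rfl, rfl⟩ := h; simp only [SimpleGraph.dist_self]; omega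
  · obtain ⟨rfl, rfl⟩ := h; simp only [SimpleGraph.dist_self]; omega
  · linarith [h.dist_le_dist_add_one v]
  · exact h.dist_le_dist_add_one c

lemma dist'_le_length {x y : V₁ ⊕ V₂} :
    ∀ p : (bridgeGraph G₁ G₂ u v).Walk x y, dist' G₁ G₂ u v x y ≤ p.length
  | .nil => by cases x <;> simp [dist']
  | .cons h q => by
    have := dist'_le_dist'_add_one_of_adj h y
    have := dist'_le_length q
    rw [SimpleGraph.Walk.length_cons]
    omega

lemma dist_eq_dist' (hG₁ : G₁.Connected) (hG₂ : G₂.Connected) (x y : V₁ ⊕ V₂) :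
    (bridgeGraph G₁ G₂ u v).dist x y = dist' G₁ G₂ u v x y := by
  obtain ⟨p, hp⟩ := exists_walk_length_eq_dist' hG₁ hG₂ x y
  obtain ⟨q, hq⟩ := SimpleGraph.Reachable.exists_walk_length_eq_dist ⟨p⟩
  exact le_antisymm (hp ▸ SimpleGraph.dist_le p) (hq ▸ dist'_le_length q)

end bridgeGraph

namespace SimpleGraph

variable {V : Type*}

noncomputable def distMatrix (G : SimpleGraph V) : Matrix V V ℝ := of fun a b => (G.dist a b : ℝ)

lemma distMatrix_isSymm (G : SimpleGraph V) : G.distMatrix.IsSymm :=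
  Matrix.ext fun a b => by simp [distMatrix, G.dist_comm]

@[simp] lemma distMatrix_apply_self (G : SimpleGraph V) (a : V) : G.distMatrix a a = 0 := by
  simp [distMatrix]

end SimpleGraph

section Curvature

variable {m : Type*} [Fintype m] {A : Matrix m m ℝ} {w : m → ℝ} {c : ℝ}

lemma dotProduct_mulVec_eq_mul_sum (hA : A.IsSymm) (hw : A *ᵥ w = fun _ => c) (y : m → ℝ) :
    w ⬝ᵥ (A *ᵥ y) = c * ∑ i, y i := by
  rw [dotProduct_mulVec, ← mulVec_transpose, hA.eq, hw]
  simp [dotProduct, Finset.mul_sum]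

lemma sum_eq_zero_of_mulVec_eq_zero (hA : A.IsSymm) (hw : A *ᵥ w = fun _ => c) (hc : c ≠ 0)
    {y : m → ℝ} (hy : A *ᵥ y = 0) : ∑ i, y i = 0 := by
  have := dotProduct_mulVec_eq_mul_sum hA hw y
  rw [hy, dotProduct_zero] at this
  exact (mul_eq_zero.mp this.symm).resolve_left hc

lemma sum_pos_of_mulVec_eq_const [Nonempty m] (hw0 : 0 ≤ w) (hw : A *ᵥ w = fun _ => c)
    (hc : c ≠ 0) : 0 < ∑ i, w i := by
  refine (Finset.sum_nonneg fun i _ => hw0 i).lt_of_ne fun h => hc ?_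
  have : w = 0 := funext fun i =>
    (Finset.sum_eq_zero_iff_of_nonneg fun i _ => hw0 i).mp h.symm i (Finset.mem_univ i)
  simpa [this] using (congrFun hw (Classical.arbitrary m)).symm

lemma weighted_sum_eq_zero_of_forall (hA : A.IsSymm) (hw : A *ᵥ w = fun _ => c) {η : m → ℝ}
    {u : m} {S T : ℝ} (h : ∀ a, (A *ᵥ η) a + (A a u + 1) * S + T = 0) :
    c * ∑ a, η a + (c + ∑ a, w a) * S + (∑ a, w a) * T = 0 := by
  have hu : ∑ a, w a * A a u = c := by
    classical
    simpa [mulVec_single_one, dotProduct] using dotProduct_mulVec_eq_mul_sum hA hw (Pi.single u 1)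
  have hsum : ∑ a, w a * ((A *ᵥ η) a + (A a u + 1) * S + T) = 0 := by simp [h]
  rw [← hsum, ← dotProduct_mulVec_eq_mul_sum hA hw η, ← hu]
  simp only [dotProduct, add_mul, Finset.sum_mul, ← Finset.sum_add_distrib]
  exact Finset.sum_congr rfl fun a _ => by ring

end Curvature

section BridgeMatrix

variable {m n : Type*} [Fintype m] [Fintype n]

def bridgeMatrix (A : Matrix m m ℝ) (B : Matrix n n ℝ) (u : m) (v : n) :
    Matrix (m ⊕ n) (m ⊕ n) ℝ :=
  fromBlocks A (of fun a b => A a u + 1 + B v b) (of fun b a => B b v + 1 + A u a) B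

variable {A : Matrix m m ℝ} {B : Matrix n n ℝ} {u : m} {v : n}

lemma bridgeMatrix_mulVec_sumElim (η : m → ℝ) (ξ : n → ℝ) :
    bridgeMatrix A B u v *ᵥ Sum.elim η ξ =
      Sum.elim (fun a => (A *ᵥ η) a + (A a u + 1) * ∑ b, ξ b + (B *ᵥ ξ) v)
        (fun b => (B *ᵥ ξ) b + (B b v + 1) * ∑ a, η a + (A *ᵥ η) u) := by
  rw [bridgeMatrix, fromBlocks_mulVec, Sum.elim_comp_inl, Sum.elim_comp_inr]
  congr 1 <;> ext <;>
    simp only [Pi.add_apply, mulVec, dotProduct, of_apply, add_mul, Finset.sum_add_distrib,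
      Finset.mul_sum, one_mul] <;> ring

variable {w₁ : m → ℝ} {w₂ : n → ℝ} {c₁ c₂ : ℝ}

theorem bridgeMatrix_mulVec_sumElim_eq_zero_iff (hA : A.IsSymm) (hB : B.IsSymm)
    (hAu : A u u = 0) (hBv : B v v = 0) (hw₁0 : 0 ≤ w₁) (hw₂0 : 0 ≤ w₂)
    (hw₁ : A *ᵥ w₁ = fun _ => c₁) (hw₂ : B *ᵥ w₂ = fun _ => c₂) (hc₁ : 0 < c₁) (hc₂ : 0 < c₂)
    {η : m → ℝ} {ξ : n → ℝ} :
    bridgeMatrix A B u v *ᵥ Sum.elim η ξ = 0 ↔ A *ᵥ η = 0 ∧ B *ᵥ ξ = 0 := by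
  have : Nonempty m := ⟨u⟩
  have : Nonempty n := ⟨v⟩
  rw [bridgeMatrix_mulVec_sumElim, ← Sum.elim_zero_zero, Sum.elim_eq_iff, funext_iff,
    funext_iff]
  constructor
  · rintro ⟨h₁, h₂⟩
    set S₁ := ∑ a, η a
    set S₂ := ∑ b, ξ b
    set T₁ := (A *ᵥ η) u
    set T₂ := (B *ᵥ ξ) v
    have e₁ : T₁ + S₂ + T₂ = 0 := by simpa [hAu] using h₁ u
    have e₂ : T₂ + S₁ + T₁ = 0 := by simpa [hBv] using h₂ v
    have f₁ := weighted_sum_eq_zero_of_forall hA hw₁ h₁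
    have f₂ := weighted_sum_eq_zero_of_forall hB hw₂ h₂
    have W₁pos := sum_pos_of_mulVec_eq_const hw₁0 hw₁ hc₁.ne'
    have W₂pos := sum_pos_of_mulVec_eq_const hw₂0 hw₂ hc₂.ne'
    set W₁ := ∑ a, w₁ a
    set W₂ := ∑ b, w₂ b
    have hS : S₁ = S₂ := by linarith
    have g₁ : 2 * c₁ * S₁ = W₁ * T₁ := by linear_combination f₁ - W₁ * e₁ + c₁ * hS
    have g₂ : 2 * c₂ * S₁ = W₂ * T₂ := by linear_combination f₂ - W₂ * e₂ + c₂ * hS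
    have hS₁ : S₁ = 0 := by
      have : S₁ * (2 * c₁ * W₂ + 2 * c₂ * W₁ + W₁ * W₂) = 0 := by
        linear_combination W₂ * g₁ + W₁ * g₂ + W₁ * W₂ * e₂
      exact (mul_eq_zero.mp this).resolve_right (by positivity)
    have hT₁ : T₁ = 0 := by simpa [hS₁, W₁pos.ne'] using g₁
    have hT₂ : T₂ = 0 := by simpa [hS₁, W₂pos.ne'] using g₂
    refine ⟨funext fun a => ?_, funext fun b => ?_⟩
    · simpa [← hS, hS₁, hT₂] using h₁ a
    · simpa [hS₁, hT₁] using h₂ b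
  · rintro ⟨h₁, h₂⟩
    have hS₁ := sum_eq_zero_of_mulVec_eq_zero hA hw₁ hc₁.ne' h₁
    have hS₂ := sum_eq_zero_of_mulVec_eq_zero hB hw₂ hc₂.ne' h₂
    exact ⟨fun a => by simp [h₁, hS₂, h₂], fun b => by simp [h₂, hS₁, h₁]⟩

end BridgeMatrix

lemma distMatrix_bridgeGraph {V₁ V₂ : Type*} {G₁ : SimpleGraph V₁} {G₂ : SimpleGraph V₂}
    (hG₁ : G₁.Connected) (hG₂ : G₂.Connected) (u : V₁) (v : V₂) :
    (bridgeGraph G₁ G₂ u v).distMatrix = bridgeMatrix G₁.distMatrix G₂.distMatrix u v := by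
  ext (a | a) (b | b) <;>
    simp [SimpleGraph.distMatrix, bridgeMatrix, bridgeGraph.dist_eq_dist' hG₁ hG₂,
      bridgeGraph.dist', SimpleGraph.dist_comm]

section Extend

variable {V₁ V₂ : Type*}

@[simp] lemma extendLeft_apply_inl (η : V₁ → ℝ) (a : V₁) :
    extendLeft V₁ V₂ η (.inl a) = η a := rfl

@[simp] lemma extendLeft_apply_inr (η : V₁ → ℝ) (b : V₂) :
    extendLeft V₁ V₂ η (.inr b) = 0 := rfl

@[simp] lemma extendRight_apply_inl (ξ : V₂ → ℝ) (a : V₁) :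
    extendRight V₁ V₂ ξ (.inl a) = 0 := rfl

@[simp] lemma extendRight_apply_inr (ξ : V₂ → ℝ) (b : V₂) :
    extendRight V₁ V₂ ξ (.inr b) = ξ b := rfl

lemma extendLeft_injective : Function.Injective (extendLeft V₁ V₂) :=
  fun _ _ h => funext fun a => by simpa using congrFun h (.inl a)

lemma extendRight_injective : Function.Injective (extendRight V₁ V₂) :=
  fun _ _ h => funext fun b => by simpa using congrFun h (.inr b)

variable {p : Submodule ℝ (V₁ → ℝ)} {q : Submodule ℝ (V₂ → ℝ)}

lemma mem_map_extendLeft_sup_map_extendRight {x : V₁ ⊕ V₂ → ℝ} :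
    x ∈ p.map (extendLeft V₁ V₂) ⊔ q.map (extendRight V₁ V₂) ↔
      x ∘ Sum.inl ∈ p ∧ x ∘ Sum.inr ∈ q := by
  constructor
  · rintro hx
    obtain ⟨_, ⟨η, hη, rfl⟩, _, ⟨ξ, hξ, rfl⟩, rfl⟩ := Submodule.mem_sup.mp hx
    have hl : (extendLeft V₁ V₂ η + extendRight V₁ V₂ ξ) ∘ Sum.inl = η := by ext; simp
    have hr : (extendLeft V₁ V₂ η + extendRight V₁ V₂ ξ) ∘ Sum.inr = ξ := by ext; simp
    rw [hl, hr]
    exact ⟨hη, hξ⟩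
  · rintro ⟨hl, hr⟩
    refine Submodule.mem_sup.mpr ⟨_, Submodule.mem_map_of_mem hl, _,
      Submodule.mem_map_of_mem hr, ?_⟩
    ext (a | b) <;> simp

lemma disjoint_map_extendLeft_map_extendRight :
    Disjoint (p.map (extendLeft V₁ V₂)) (q.map (extendRight V₁ V₂)) := by
  rw [Submodule.disjoint_def]
  rintro _ ⟨η, -, rfl⟩ ⟨ξ, -, h⟩
  ext (a | b)
  · simpa using (congrFun h (.inl a)).symm
  · simp

lemma finrank_map_extendLeft_sup_map_extendRight [Finite V₁] [Finite V₂] :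
    Module.finrank ℝ ↥(p.map (extendLeft V₁ V₂) ⊔ q.map (extendRight V₁ V₂)) =
      Module.finrank ℝ p + Module.finrank ℝ q := by
  have h := Submodule.finrank_sup_add_finrank_inf_eq (p.map (extendLeft V₁ V₂))
    (q.map (extendRight V₁ V₂))
  rw [disjoint_map_extendLeft_map_extendRight.eq_bot, finrank_bot, add_zero] at h
  rw [h, (Submodule.equivMapOfInjective _ extendLeft_injective p).finrank_eq,
    (Submodule.equivMapOfInjective _ extendRight_injective q).finrank_eq]

end Extend

/-- If `G₁` and `G₂` are finite connected graphs admitting nonnegative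
curvatures and `G` is obtained by adding an edge between them, then
`null(D_G) = null(D₁) ⊕ null(D₂)` (null spaces embedded by augmenting zeros); in
particular the dimensions add up. -/
theorem stmt_14 {V₁ V₂ : Type*} [Fintype V₁] [Fintype V₂]
    (G₁ : SimpleGraph V₁) (G₂ : SimpleGraph V₂)
    (hG₁ : G₁.Connected) (hG₂ : G₂.Connected)
    (D₁ : Matrix V₁ V₁ ℝ) (hD₁ : ∀ a b, D₁ a b = (G₁.dist a b : ℝ))
    (D₂ : Matrix V₂ V₂ ℝ) (hD₂ : ∀ a b, D₂ a b = (G₂.dist a b : ℝ))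
    (w₁ : V₁ → ℝ) (hw₁0 : ∀ i, 0 ≤ w₁ i)
    (hw₁ : D₁.mulVec w₁ = fun _ => (Fintype.card V₁ : ℝ))
    (w₂ : V₂ → ℝ) (hw₂0 : ∀ i, 0 ≤ w₂ i)
    (hw₂ : D₂.mulVec w₂ = fun _ => (Fintype.card V₂ : ℝ))
    (u : V₁) (v : V₂)
    (DG : Matrix (V₁ ⊕ V₂) (V₁ ⊕ V₂) ℝ)
    (hDG : ∀ a b, DG a b = ((bridgeGraph G₁ G₂ u v).dist a b : ℝ)) :
    LinearMap.ker DG.mulVecLin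
        = (LinearMap.ker D₁.mulVecLin).map (extendLeft V₁ V₂)
          ⊔ (LinearMap.ker D₂.mulVecLin).map (extendRight V₁ V₂) ∧
      Disjoint ((LinearMap.ker D₁.mulVecLin).map (extendLeft V₁ V₂))
        ((LinearMap.ker D₂.mulVecLin).map (extendRight V₁ V₂)) ∧
      Module.finrank ℝ (LinearMap.ker DG.mulVecLin)
        = Module.finrank ℝ (LinearMap.ker D₁.mulVecLin)
          + Module.finrank ℝ (LinearMap.ker D₂.mulVecLin) := by
  obtain rfl : D₁ = G₁.distMatrix := Matrix.ext hD₁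
  obtain rfl : D₂ = G₂.distMatrix := Matrix.ext hD₂
  obtain rfl : DG = (bridgeGraph G₁ G₂ u v).distMatrix := Matrix.ext hDG
  have hker : LinearMap.ker (bridgeGraph G₁ G₂ u v).distMatrix.mulVecLin
      = (LinearMap.ker G₁.distMatrix.mulVecLin).map (extendLeft V₁ V₂)
        ⊔ (LinearMap.ker G₂.distMatrix.mulVecLin).map (extendRight V₁ V₂) := by
    ext x
    simp only [mem_map_extendLeft_sup_map_extendRight, LinearMap.mem_ker, mulVecLin_apply]
    rw [distMatrix_bridgeGraph hG₁ hG₂, ← Sum.elim_comp_inl_inr x,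
      bridgeMatrix_mulVec_sumElim_eq_zero_iff G₁.distMatrix_isSymm G₂.distMatrix_isSymm
        (by simp) (by simp) hw₁0 hw₂0 hw₁ hw₂ (Nat.cast_pos.mpr (Fintype.card_pos_iff.mpr ⟨u⟩))
        (Nat.cast_pos.mpr (Fintype.card_pos_iff.mpr ⟨v⟩))]
    rfl
  exact ⟨hker, disjoint_map_extendLeft_map_extendRight,
    hker ▸ finrank_map_extendLeft_sup_map_extendRight⟩
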